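/- Let Φ_x ∈ ℝ^{(T+1)n×(T+1)n} and Φ_u ∈ ℝ^{(T+1)p×(T+1)n} be block lower triangular matrices satisfying (I − ZÂ)Φ_x − ZB̂Φ_u = I. Then every diagonal block of Φ_x equals the identity: for all t ∈ {0,…,T} and i, j ∈ {1,…,n}, the ((t,i),(t,j)) entry of Φ_x equals 1 if i = j and 0 otherwise. In particular Φ_x is invertible. -/

import Mathlib

/-- Block lower triangular: the `((t,i),(s,j))` entry vanishes whenever `s > t`. -/
def BlockLT {a b T : ℕ}
    (M : Matrix (Fin (T + 1) × Fin a) (Fin (T + 1) × Fin b) ℝ) : Prop :=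
  ∀ (t s : Fin (T + 1)) (i : Fin a) (j : Fin b), t < s → M (t, i) (s, j) = 0

/-- Strictly block lower triangular: the `((t,i),(s,j))` entry vanishes whenever `s ≥ t`. -/
def StrictBlockLT {a b T : ℕ}
    (M : Matrix (Fin (T + 1) × Fin a) (Fin (T + 1) × Fin b) ℝ) : Prop :=
  ∀ (t s : Fin (T + 1)) (i : Fin a) (j : Fin b), t ≤ s → M (t, i) (s, j) = 0

/-- The block-downshift matrix `Z`: the `((t,i),(s,j))` entry is `1` iff `t = s + 1` and `i = j`. -/
def shiftZ (n T : ℕ) : Matrix (Fin (T + 1) × Fin n) (Fin (T + 1) × Fin n) ℝ :=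
  fun r c => if (r.1 : ℕ) = (c.1 : ℕ) + 1 ∧ r.2 = c.2 then 1 else 0

/-- `Â = blkdiag(A, …, A)`. -/
def hatA {n : ℕ} (T : ℕ) (A : Matrix (Fin n) (Fin n) ℝ) :
    Matrix (Fin (T + 1) × Fin n) (Fin (T + 1) × Fin n) ℝ :=
  fun r c => if r.1 = c.1 then A r.2 c.2 else 0

/-- `B̂ = blkdiag(B, …, B, 0)`. -/
def hatB {n p : ℕ} (T : ℕ) (B : Matrix (Fin n) (Fin p) ℝ) :
    Matrix (Fin (T + 1) × Fin n) (Fin (T + 1) × Fin p) ℝ :=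
  fun r c => if r.1 = c.1 ∧ (c.1 : ℕ) < T then B r.2 c.2 else 0

/-!
Both `Z Â` and `Z B̂` are strictly block lower triangular, and a strictly block lower
triangular matrix times a block lower triangular one is again strictly block lower
triangular. Hence the diagonal blocks of `Z Â Φ_x` and `Z B̂ Φ_u` vanish, and the diagonal
blocks of the identity `(I − ZÂ)Φ_x − ZB̂Φ_u = I` read `Φ_x(t,t) = I`. A block lower triangular
matrix with identity diagonal blocks has determinant `1`.
-/

open Matrix

section BlockTriangular

variable {a b c T : ℕ}

theorem blockLT_blockDiagonal {M : Matrix (Fin (T + 1) × Fin a) (Fin (T + 1) × Fin b) ℝ}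
    (hM : ∀ r s, r.1 ≠ s.1 → M r s = 0) : BlockLT M :=
  fun _ _ _ _ hts => hM _ _ hts.ne

theorem blockLT_hatA (A : Matrix (Fin a) (Fin a) ℝ) : BlockLT (hatA T A) :=
  blockLT_blockDiagonal fun _ _ h => if_neg h

theorem blockLT_hatB (B : Matrix (Fin a) (Fin b) ℝ) : BlockLT (hatB T B) :=
  blockLT_blockDiagonal fun _ _ h => if_neg fun h' => h h'.1

theorem strictBlockLT_shiftZ_mul {M : Matrix (Fin (T + 1) × Fin a) (Fin (T + 1) × Fin b) ℝ}
    (hM : BlockLT M) : StrictBlockLT (shiftZ a T * M) := by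
  intro t s i j hts
  rw [mul_apply]
  refine Finset.sum_eq_zero fun ⟨r, k⟩ _ => ?_
  by_cases hr : (t : ℕ) = r + 1 ∧ i = k
  · have hrs : r < s := Fin.lt_def.mpr (by have := Fin.le_def.mp hts; omega)
    rw [hM r s k j hrs, mul_zero]
  · rw [shiftZ, if_neg hr, zero_mul]

theorem StrictBlockLT.mul_blockLT {M : Matrix (Fin (T + 1) × Fin a) (Fin (T + 1) × Fin b) ℝ}
    {N : Matrix (Fin (T + 1) × Fin b) (Fin (T + 1) × Fin c) ℝ}
    (hM : StrictBlockLT M) (hN : BlockLT N) : StrictBlockLT (M * N) := by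
  intro t s i j hts
  rw [mul_apply]
  refine Finset.sum_eq_zero fun ⟨r, k⟩ _ => ?_
  rcases lt_or_ge r t with hrt | htr
  · rw [hN r s k j (hrt.trans_le hts), mul_zero]
  · rw [hM t r i k htr, zero_mul]

theorem StrictBlockLT.apply_diag_block {M : Matrix (Fin (T + 1) × Fin a) (Fin (T + 1) × Fin b) ℝ}
    (hM : StrictBlockLT M) (t : Fin (T + 1)) (i : Fin a) (j : Fin b) : M (t, i) (t, j) = 0 :=
  hM t t i j le_rfl

theorem BlockLT.blockTriangular {M : Matrix (Fin (T + 1) × Fin a) (Fin (T + 1) × Fin a) ℝ}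
    (hM : BlockLT M) : M.BlockTriangular (OrderDual.toDual ∘ Prod.fst) :=
  fun r s hrs => hM r.1 s.1 r.2 s.2 hrs

theorem BlockLT.det_eq_one {M : Matrix (Fin (T + 1) × Fin a) (Fin (T + 1) × Fin a) ℝ}
    (hM : BlockLT M) (hdiag : ∀ t i j, M (t, i) (t, j) = if i = j then 1 else 0) :
    M.det = 1 := by
  rw [hM.blockTriangular.det]
  refine Finset.prod_eq_one fun t _ => ?_
  suffices M.toSquareBlock (OrderDual.toDual ∘ Prod.fst) t = 1 by rw [this, det_one]
  ext ⟨⟨s, i⟩, hs⟩ ⟨⟨s', j⟩, hs'⟩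
  obtain rfl : s = s' := OrderDual.toDual.injective (hs.trans hs'.symm)
  simp [toSquareBlock_def, hdiag, one_apply]

end BlockTriangular

/-- If block lower triangular `Φ_x, Φ_u` satisfy `(I − ZÂ)Φ_x − ZB̂Φ_u = I`, then every
diagonal block of `Φ_x` equals the identity, and in particular `Φ_x` is invertible. -/
theorem sls_diag_blocks_id {n p T : ℕ}
    (A : Matrix (Fin n) (Fin n) ℝ) (B : Matrix (Fin n) (Fin p) ℝ)
    (Φx : Matrix (Fin (T + 1) × Fin n) (Fin (T + 1) × Fin n) ℝ)
    (Φu : Matrix (Fin (T + 1) × Fin p) (Fin (T + 1) × Fin n) ℝ)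
    (hx : BlockLT Φx) (hu : BlockLT Φu)
    (haff : (1 - shiftZ n T * hatA T A) * Φx - shiftZ n T * hatB T B * Φu = 1) :
    (∀ (t : Fin (T + 1)) (i j : Fin n),
      Φx (t, i) (t, j) = if i = j then 1 else 0) ∧
    IsUnit Φx := by
  have hA := (strictBlockLT_shiftZ_mul (blockLT_hatA (T := T) A)).mul_blockLT hx
  have hB := (strictBlockLT_shiftZ_mul (blockLT_hatB (T := T) B)).mul_blockLT hu
  have hdiag : ∀ (t : Fin (T + 1)) (i j : Fin n), Φx (t, i) (t, j) = if i = j then 1 else 0 := by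
    intro t i j
    have h := congr_fun₂ haff (t, i) (t, j)
    rw [sub_mul, one_mul, Matrix.sub_apply, Matrix.sub_apply, hA.apply_diag_block,
      hB.apply_diag_block, sub_zero, sub_zero, one_apply] at h
    simpa using h
  refine ⟨hdiag, ?_⟩
  rw [isUnit_iff_isUnit_det, hx.det_eq_one hdiag]
  exact isUnit_one
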